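/- Let ψ_n = φ in the chosen enumeration of the subformulas of φ, let k_φ be the least k with σ_φ^{k+1}(W⁰,R⁰) = σ_φ^{k}(W⁰,R⁰), and let (W^{k_φ},R^{k_φ}) := σ_φ^{k_φ}(W⁰,R⁰). Then φ ∈ KDe if and only if for every tip (a_1,…,a_n) ∈ W^{k_φ}, a_n = 1. -/

import Mathlib

/-- Formulas of unimodal modal logic. -/
inductive Formula : Type
  | atom : ℕ → Formula
  | falsum : Formula
  | neg : Formula → Formula
  | and : Formula → Formula → Formula
  | box : Formula → Formula
deriving DecidableEq

/-- Material implication, as the usual classical abbreviation. -/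
def Formula.imp (φ ψ : Formula) : Formula := .neg (.and φ (.neg ψ))

/-- Disjunction, as the usual classical abbreviation. -/
def Formula.or (φ ψ : Formula) : Formula := .neg (.and (.neg φ) (.neg ψ))

/-- Uniform substitution of formulas for atoms. -/
def fsubst (σ : ℕ → Formula) : Formula → Formula
  | .atom q => σ q
  | .falsum => .falsum
  | .neg φ => .neg (fsubst σ φ)
  | .and φ ψ => .and (fsubst σ φ) (fsubst σ ψ)
  | .box φ => .box (fsubst σ φ)

/-- A Boolean valuation of the modal language: a Boolean assignment respecting
`⊥`, `¬` and `∧` (boxed formulas are treated as atoms). -/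
def IsBoolVal (v : Formula → Bool) : Prop :=
  v .falsum = false ∧ (∀ φ, v (.neg φ) = !(v φ)) ∧
  (∀ φ ψ, v (.and φ ψ) = (v φ && v ψ))

/-- Classical propositional tautologies of the modal language. -/
def Tautology (φ : Formula) : Prop := ∀ v, IsBoolVal v → v φ = true

/-- A modal logic: a set of formulas closed under uniform substitution and modus
ponens, containing all classical propositional tautologies, containing the axioms
`□p∧□q→□(p∧q)` and `□⊤`, and closed under the rule: from `φ→ψ` infer `□φ→□ψ`. -/
structure IsModalLogic (L : Set Formula) : Prop where
  taut : ∀ φ, Tautology φ → φ ∈ L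
  mp : ∀ φ ψ, Formula.imp φ ψ ∈ L → φ ∈ L → ψ ∈ L
  subst : ∀ φ σ, φ ∈ L → fsubst σ φ ∈ L
  axK : Formula.imp (.and (.box (.atom 0)) (.box (.atom 1)))
          (.box (.and (.atom 0) (.atom 1))) ∈ L
  axTop : Formula.box (.neg .falsum) ∈ L
  mono : ∀ φ ψ, Formula.imp φ ψ ∈ L → Formula.imp (.box φ) (.box ψ) ∈ L

/-- An `L`-theory: a set of formulas containing `L` and closed under modus ponens. -/
def IsTheory (L Γ : Set Formula) : Prop :=
  L ⊆ Γ ∧ ∀ φ ψ, Formula.imp φ ψ ∈ Γ → φ ∈ Γ → ψ ∈ Γ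

/-- A prime `L`-theory: a proper `L`-theory `Γ` (i.e. `⊥ ∉ Γ`) such that
`φ∨ψ ∈ Γ` implies `φ ∈ Γ` or `ψ ∈ Γ`. -/
def IsPrime (L Γ : Set Formula) : Prop :=
  IsTheory L Γ ∧ Formula.falsum ∉ Γ ∧
  ∀ φ ψ, Formula.or φ ψ ∈ Γ → φ ∈ Γ ∨ ψ ∈ Γ

/-- `□Γ := {φ : □φ ∈ Γ}`. -/
def boxInv (Γ : Set Formula) : Set Formula := {φ | Formula.box φ ∈ Γ}

/-- `KDe`: the least modal logic containing `□□p → □p`. -/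
def KDe : Set Formula :=
  ⋂₀ {L : Set Formula |
        IsModalLogic L ∧ Formula.imp (.box (.box (.atom 0))) (.box (.atom 0)) ∈ L}

/-- The set of subformulas of a formula. -/
def Subf : Formula → Set Formula
  | .atom p => {.atom p}
  | .falsum => {.falsum}
  | .neg φ => insert (.neg φ) (Subf φ)
  | .and φ ψ => insert (.and φ ψ) (Subf φ ∪ Subf ψ)
  | .box φ => insert (.box φ) (Subf φ)

/-- `ψs` is an admissible enumeration of the subformulas of `φ`: it enumerates
`Σ_φ` without repetition, and components of a subformula come earlier. -/
def IsEnum (φ : Formula) {n : ℕ} (ψs : Fin n → Formula) : Prop :=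
  Function.Injective ψs ∧ Set.range ψs = Subf φ ∧
  (∀ i j : Fin n, ψs i = .neg (ψs j) → j < i) ∧
  (∀ i j k : Fin n, ψs i = .and (ψs j) (ψs k) → j < i ∧ k < i) ∧
  (∀ i j : Fin n, ψs i = .box (ψs j) → j < i)

/-- A `φ`-tip: a tuple of bits respecting the Boolean structure of the enumerated
subformulas. -/
def IsTip {n : ℕ} (ψs : Fin n → Formula) (a : Fin n → Bool) : Prop :=
  (∀ i : Fin n, ψs i = .falsum → a i = false) ∧
  (∀ i j : Fin n, ψs i = .neg (ψs j) → a i = !(a j)) ∧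
  (∀ i j k : Fin n, ψs i = .and (ψs j) (ψs k) → a i = (a j && a k))

/-- `W⁰`: the set of all `φ`-tips. -/
def tips {n : ℕ} (ψs : Fin n → Formula) : Set (Fin n → Bool) := {a | IsTip ψs a}

/-- `R⁰`: the relation on `W⁰` with `a R⁰ b` iff whenever `ψ_i = □ψ_j` and `a_i = 1`
then `b_j = 1`. -/
def R0 {n : ℕ} (ψs : Fin n → Formula) (a b : Fin n → Bool) : Prop :=
  a ∈ tips ψs ∧ b ∈ tips ψs ∧
  ∀ i j : Fin n, ψs i = .box (ψs j) → a i = true → b j = true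

open Classical in
/-- `τ_φ(s)`: the tuple of bits recording which enumerated subformulas belong to the
theory `s`. -/
noncomputable def tipOf {n : ℕ} (ψs : Fin n → Formula) (s : Set Formula) :
    Fin n → Bool :=
  fun i => if ψs i ∈ s then true else false

/-- A `φ`-clip: `(W,R)` with `W ⊆ W⁰`, `R` a relation on `W` included in `R⁰`,
containing the tips of all prime `KDe`-theories and the `R`-edges coming from
the canonical relation between prime `KDe`-theories. -/
structure IsClip {n : ℕ} (ψs : Fin n → Formula)
    (W : Set (Fin n → Bool)) (R : (Fin n → Bool) → (Fin n → Bool) → Prop) : Prop where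
  wsub : W ⊆ tips ψs
  rmem : ∀ a b, R a b → a ∈ W ∧ b ∈ W
  rsub : ∀ a b, R a b → R0 ψs a b
  tmem : ∀ s : Set Formula, IsPrime KDe s → tipOf ψs s ∈ W
  tedge : ∀ s t : Set Formula, IsPrime KDe s → IsPrime KDe t → boxInv s ⊆ t →
    R (tipOf ψs s) (tipOf ψs t)

/-- The set of worlds of `σ_φ(W,R)`. -/
def sigmaW {n : ℕ} (ψs : Fin n → Formula) (W : Set (Fin n → Bool))
    (R : (Fin n → Bool) → (Fin n → Bool) → Prop) : Set (Fin n → Bool) :=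
  {a | a ∈ W ∧ ∀ i j : Fin n, ψs i = .box (ψs j) → a i = false →
         ∃ b ∈ W, R a b ∧ b j = false}

/-- The relation of `σ_φ(W,R)`: `a R' b` iff `a, b` survive in `σ_φ(W,R)`, `a R b`,
and there is `c ∈ W` with `a R c` and `c R b`. -/
def sigmaR {n : ℕ} (ψs : Fin n → Formula) (W : Set (Fin n → Bool))
    (R : (Fin n → Bool) → (Fin n → Bool) → Prop) :
    (Fin n → Bool) → (Fin n → Bool) → Prop :=
  fun a b => a ∈ sigmaW ψs W R ∧ b ∈ sigmaW ψs W R ∧ R a b ∧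
    ∃ c ∈ W, R a c ∧ R c b

/-- `σ_φ` as an operation on pairs `(W,R)`. -/
def sigmaPair {n : ℕ} (ψs : Fin n → Formula) :
    Set (Fin n → Bool) × ((Fin n → Bool) → (Fin n → Bool) → Prop) →
    Set (Fin n → Bool) × ((Fin n → Bool) → (Fin n → Bool) → Prop) :=
  fun X => (sigmaW ψs X.1 X.2, sigmaR ψs X.1 X.2)

/-- The initial pair `(W⁰, R⁰)`. -/
def X0 {n : ℕ} (ψs : Fin n → Formula) :
    Set (Fin n → Bool) × ((Fin n → Bool) → (Fin n → Bool) → Prop) :=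
  (tips ψs, R0 ψs)

/-! Soundness: at a fixpoint of `σ_φ` every surviving tip has witnesses for its false boxes,
so a truth lemma holds on the frame `(W, R)`, and every `R`-edge factors through a world of
`W`, so this frame is dense and validates `KDe`. Completeness: each `σ_φ`-iterate is still a
clip, because in the canonical model a prime theory has successors refuting its false boxes
and, by `□□p → □p`, every canonical edge factors through a prime theory; hence a prime theory
containing `¬φ` gives a tip of the fixpoint with `a_n = 0`. -/

open Formula

def propEval (v : Formula → Bool) : Formula → Bool
  | .atom p => v (.atom p)
  | .falsum => false
  | .neg A => !propEval v A
  | .and A B => propEval v A && propEval v B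
  | .box A => v (.box A)

@[simp] lemma propEval_falsum (v : Formula → Bool) : propEval v .falsum = false := rfl

@[simp] lemma propEval_neg (v : Formula → Bool) (A : Formula) :
    propEval v (.neg A) = !propEval v A := rfl

@[simp] lemma propEval_and (v : Formula → Bool) (A B : Formula) :
    propEval v (.and A B) = (propEval v A && propEval v B) := rfl

@[simp] lemma propEval_imp (v : Formula → Bool) (A B : Formula) :
    propEval v (A.imp B) = (!propEval v A || propEval v B) := by
  simp [Formula.imp]

@[simp] lemma propEval_or (v : Formula → Bool) (A B : Formula) :
    propEval v (A.or B) = (propEval v A || propEval v B) := by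
  simp [Formula.or]

lemma propEval_eq_of_isBoolVal {v : Formula → Bool} (hv : IsBoolVal v) (A : Formula) :
    propEval v A = v A := by
  induction A with
  | atom _ | box _ => rfl
  | falsum => exact hv.1.symm
  | neg A ih => rw [hv.2.1, propEval_neg, ih]
  | and A B ihA ihB => rw [hv.2.2, propEval_and, ihA, ihB]

lemma tautology_of_propEval {A : Formula} (h : ∀ v, propEval v A = true) : Tautology A :=
  fun v hv => propEval_eq_of_isBoolVal hv A ▸ h v

def conj : List Formula → Formula
  | [] => .neg .falsum
  | A :: l => .and A (conj l)

@[simp] lemma propEval_conj_nil (v : Formula → Bool) : propEval v (conj []) = true := rfl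

@[simp] lemma propEval_conj_cons (v : Formula → Bool) (A : Formula) (l : List Formula) :
    propEval v (conj (A :: l)) = (propEval v A && propEval v (conj l)) := rfl

lemma propEval_conj (v : Formula → Bool) (l : List Formula) :
    propEval v (conj l) = l.all (propEval v) := by
  induction l with
  | nil => rfl
  | cons A l ih => simp [ih]

theorem isModalLogic_KDe : IsModalLogic KDe where
  taut A h _ hL := hL.1.taut A h
  mp A B h₁ h₂ L hL := hL.1.mp A B (h₁ L hL) (h₂ L hL)
  subst A σ h L hL := hL.1.subst A σ (h L hL)
  axK _ hL := hL.1.axK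
  axTop _ hL := hL.1.axTop
  mono A B h L hL := hL.1.mono A B (h L hL)

lemma isTheory_KDe : IsTheory KDe KDe := ⟨subset_rfl, isModalLogic_KDe.mp⟩

lemma mem_KDe_of_propEval {A : Formula} (h : ∀ v, propEval v A = true) : A ∈ KDe :=
  isModalLogic_KDe.taut A (tautology_of_propEval h)

lemma imp_box_box_mem_KDe (A : Formula) : (box (box A)).imp (box A) ∈ KDe :=
  isModalLogic_KDe.subst _ (fun _ => A) fun _ hL => hL.2

lemma imp_and_box_mem_KDe (A B : Formula) :
    (and (box A) (box B)).imp (box (and A B)) ∈ KDe :=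
  isModalLogic_KDe.subst _ (fun k => if k = 0 then A else B) isModalLogic_KDe.axK

lemma box_imp_box_mem_KDe {A B : Formula} (h : A.imp B ∈ KDe) : (box A).imp (box B) ∈ KDe :=
  isModalLogic_KDe.mono A B h

def Derives (Γ : Set Formula) (A : Formula) : Prop :=
  ∃ l : List Formula, (∀ x ∈ l, x ∈ Γ) ∧ (conj l).imp A ∈ KDe

namespace Derives

variable {Γ : Set Formula} {A B : Formula}

lemma of_KDe (h : A ∈ KDe) : Derives Γ A :=
  ⟨[], by simp, isModalLogic_KDe.mp _ _ (mem_KDe_of_propEval fun v => by simp) h⟩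

lemma of_propEval (h : ∀ v, propEval v A = true) : Derives Γ A :=
  of_KDe (mem_KDe_of_propEval h)

lemma of_mem (h : A ∈ Γ) : Derives Γ A :=
  ⟨[A], by simp [h], mem_KDe_of_propEval fun v => by simp⟩

lemma mp : Derives Γ (A.imp B) → Derives Γ A → Derives Γ B
  | ⟨l₁, hl₁, h₁⟩, ⟨l₂, hl₂, h₂⟩ => by
    refine ⟨l₁ ++ l₂, fun x hx => (List.mem_append.1 hx).elim (hl₁ x) (hl₂ x), ?_⟩
    have h : ((conj l₁).imp (A.imp B)).imp (((conj l₂).imp A).imp ((conj (l₁ ++ l₂)).imp B))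
        ∈ KDe := mem_KDe_of_propEval fun v => by simp [propEval_conj]; grind
    exact isModalLogic_KDe.mp _ _ (isModalLogic_KDe.mp _ _ h h₁) h₂

lemma imp_of_insert (h : Derives (insert A Γ) B) : Derives Γ (A.imp B) := by
  obtain ⟨l, hl, hlB⟩ := h
  have imp_conj : ∀ m : List Formula, (∀ x ∈ m, x ∈ insert A Γ) →
      Derives Γ (A.imp (conj m)) := by
    intro m hm
    induction m with
    | nil => exact of_propEval fun v => by simp
    | cons x m ih =>
      have hx : Derives Γ (A.imp x) := by
        rcases hm x List.mem_cons_self with rfl | hx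
        · exact of_propEval fun v => by simp
        · exact (of_propEval fun v => by simp; grind).mp (of_mem hx)
      exact ((of_propEval fun v => by simp; grind).mp hx).mp
        (ih fun y hy => hm y (List.mem_cons_of_mem x hy))
  exact ((of_propEval fun v => by simp; grind).mp (imp_conj l hl)).mp (of_KDe hlB)

lemma of_insert_neg (h : Derives (insert (neg A) Γ) falsum) : Derives Γ A :=
  (of_propEval fun v => by simp).mp (imp_of_insert h)

lemma exists_mem_of_sUnion {c : Set (Set Formula)} (hc : IsChain (· ⊆ ·) c)
    (hne : c.Nonempty) : Derives (⋃₀ c) A → ∃ Γ ∈ c, Derives Γ A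
  | ⟨l, hl, hlA⟩ =>
    let ⟨Γ, hΓ, hlΓ⟩ := hc.directedOn.exists_mem_subset_of_finite_of_subset_sUnion hne
      (List.finite_toSet l) hl
    ⟨Γ, hΓ, l, hlΓ, hlA⟩

end Derives

open Derives

namespace IsTheory

variable {s : Set Formula} {A : Formula}

lemma mem_of_derives (hs : IsTheory KDe s) (h : Derives s A) : A ∈ s := by
  obtain ⟨l, hl, hlA⟩ := h
  induction l generalizing A with
  | nil => exact hs.2 _ _ (hs.1 hlA) (hs.1 (mem_KDe_of_propEval fun v => by simp))
  | cons x l ih =>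
    have hl' : (conj l).imp (x.imp A) ∈ KDe :=
      isModalLogic_KDe.mp _ _ (mem_KDe_of_propEval fun v => by simp; grind) hlA
    exact hs.2 _ _ (ih (fun y hy => hl y (List.mem_cons_of_mem x hy)) hl')
      (hl x List.mem_cons_self)

lemma box_conj_mem (hs : IsTheory KDe s) {l : List Formula} (hl : ∀ x ∈ l, x ∈ boxInv s) :
    box (conj l) ∈ s := by
  induction l with
  | nil => exact hs.1 isModalLogic_KDe.axTop
  | cons x l ih =>
    have hK : (box x).imp ((box (conj l)).imp (box (and x (conj l)))) ∈ KDe :=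
      isModalLogic_KDe.mp _ _ (mem_KDe_of_propEval fun v => by simp; grind)
        (imp_and_box_mem_KDe x (conj l))
    exact hs.mem_of_derives (((of_KDe hK).mp (of_mem (hl x List.mem_cons_self))).mp
      (of_mem (ih fun y hy => hl y (List.mem_cons_of_mem x hy))))

lemma box_mem_of_derives (hs : IsTheory KDe s) (h : Derives (boxInv s) A) : box A ∈ s :=
  let ⟨_, hl, hlA⟩ := h
  hs.2 _ _ (hs.1 (box_imp_box_mem_KDe hlA)) (hs.box_conj_mem hl)

end IsTheory

lemma isPrime_of_maximal {M : Set Formula} (hM : Maximal (fun Γ => ¬ Derives Γ falsum) M) :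
    IsPrime KDe M := by
  have refute : ∀ A, A ∉ M → Derives M (A.imp falsum) := fun A hA =>
    imp_of_insert (not_not.1 fun h => hA (hM.mem_of_prop_insert h))
  have closed : ∀ A, Derives M A → A ∈ M := fun A hA =>
    not_not.1 fun hAM => hM.prop ((refute A hAM).mp hA)
  refine ⟨⟨fun A hA => closed A (of_KDe hA),
    fun A B hAB hA => closed B ((of_mem hAB).mp (of_mem hA))⟩,
    fun h => hM.prop (of_mem h), fun A B hAB => or_iff_not_imp_left.2 fun hA => ?_⟩
  exact closed B (((of_propEval fun v => by simp; grind).mp (of_mem hAB)).mp (refute A hA))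

theorem exists_prime_superset {Γ : Set Formula} (h : ¬ Derives Γ falsum) :
    ∃ M, Γ ⊆ M ∧ IsPrime KDe M := by
  obtain ⟨M, hΓM, hM⟩ := zorn_subset_nonempty {Δ | ¬ Derives Δ falsum}
    (fun c hc hchain hne => ⟨⋃₀ c, fun h =>
      let ⟨_, hΔ, hΔfalsum⟩ := exists_mem_of_sUnion hchain hne h
      hc hΔ hΔfalsum,
      fun _ => Set.subset_sUnion_of_mem⟩) Γ h
  exact ⟨M, hΓM, isPrime_of_maximal hM⟩

namespace IsPrime

variable {s : Set Formula}

lemma neg_mem_iff (hs : IsPrime KDe s) (A : Formula) : neg A ∈ s ↔ A ∉ s := by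
  refine ⟨fun hnA hA => hs.2.1 (hs.1.mem_of_derives
    (((of_propEval fun v => by simp).mp (of_mem hA)).mp (of_mem hnA))), fun hA => ?_⟩
  have hem : A.or (neg A) ∈ s := hs.1.1 (mem_KDe_of_propEval fun v => by simp)
  exact (hs.2.2 _ _ hem).resolve_left hA

lemma and_mem_iff (hs : IsPrime KDe s) (A B : Formula) : and A B ∈ s ↔ A ∈ s ∧ B ∈ s := by
  refine ⟨fun h => ⟨?_, ?_⟩, fun h => ?_⟩
  · exact hs.1.mem_of_derives ((of_propEval fun v => by simp; grind).mp (of_mem h))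
  · exact hs.1.mem_of_derives ((of_propEval fun v => by simp; grind).mp (of_mem h))
  · exact hs.1.mem_of_derives
      (((of_propEval fun v => by simp; grind).mp (of_mem h.1)).mp (of_mem h.2))

end IsPrime

theorem exists_prime_succ {s : Set Formula} (hs : IsPrime KDe s) {A : Formula}
    (hA : box A ∉ s) : ∃ t, IsPrime KDe t ∧ boxInv s ⊆ t ∧ A ∉ t := by
  obtain ⟨t, hsub, ht⟩ := exists_prime_superset (Γ := insert (neg A) (boxInv s))
    fun h => hA (hs.1.box_mem_of_derives (of_insert_neg h))
  exact ⟨t, ht, (Set.subset_insert _ _).trans hsub,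
    (ht.neg_mem_iff A).1 (hsub (Set.mem_insert _ _))⟩

theorem exists_prime_between {s t : Set Formula} (hs : IsPrime KDe s) (ht : IsPrime KDe t)
    (hst : boxInv s ⊆ t) : ∃ u, IsPrime KDe u ∧ boxInv s ⊆ u ∧ boxInv u ⊆ t := by
  set N : Set Formula := {x | ∃ δ ∉ t, x = neg (box δ)}
  -- As `t` is prime, the `δ ∉ t` are closed under `∨`, so a single `□δ` bounds any list.
  have bound : ∀ l : List Formula, (∀ x ∈ l, x ∈ boxInv s ∪ N) →
      ∃ δ ∉ t, Derives (boxInv s) ((neg (conj l)).imp (box δ)) := by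
    intro l hl
    induction l with
    | nil => exact ⟨falsum, ht.2.1, of_propEval fun v => by simp⟩
    | cons x l ih =>
      obtain ⟨δ', hδ', hl'⟩ := ih fun y hy => hl y (List.mem_cons_of_mem x hy)
      rcases hl x List.mem_cons_self with hx | ⟨δ, hδ, rfl⟩
      · exact ⟨δ', hδ', ((of_propEval fun v => by simp; grind).mp (of_mem hx)).mp hl'⟩
      · refine ⟨δ.or δ', fun h => (ht.2.2 _ _ h).elim hδ hδ', ?_⟩
        have h₁ : (box δ).imp (box (δ.or δ')) ∈ KDe :=
          box_imp_box_mem_KDe (mem_KDe_of_propEval fun v => by simp; grind)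
        have h₂ : (box δ').imp (box (δ.or δ')) ∈ KDe :=
          box_imp_box_mem_KDe (mem_KDe_of_propEval fun v => by simp; grind)
        exact (((of_propEval fun v => by simp; grind).mp (of_KDe h₁)).mp (of_KDe h₂)).mp hl'
  obtain ⟨u, hsub, hu⟩ := exists_prime_superset (Γ := boxInv s ∪ N) fun ⟨l, hl, hlfalsum⟩ => by
    obtain ⟨δ, hδ, hlδ⟩ := bound l hl
    have hboxδ : Derives (boxInv s) (box δ) :=
      hlδ.mp (of_KDe (isModalLogic_KDe.mp _ _ (mem_KDe_of_propEval fun v => by simp) hlfalsum))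
    exact hδ (hst (hs.1.2 _ _ (hs.1.1 (imp_box_box_mem_KDe δ))
      (hs.1.box_mem_of_derives hboxδ)))
  refine ⟨u, hu, Set.subset_union_left.trans hsub, fun χ hχ => ?_⟩
  by_contra hχt
  exact (hu.neg_mem_iff _).1 (hsub (.inr ⟨χ, hχt, rfl⟩)) hχ

section Clips

variable {n : ℕ} {ψs : Fin n → Formula}

lemma tipOf_eq_true_iff (ψs : Fin n → Formula) (s : Set Formula) (i : Fin n) :
    tipOf ψs s i = true ↔ ψs i ∈ s := by
  simp [tipOf]

lemma tipOf_mem_tips {s : Set Formula} (hs : IsPrime KDe s) : tipOf ψs s ∈ tips ψs := by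
  refine ⟨fun i hi => ?_, fun i j hij => ?_, fun i j k hijk => ?_⟩
  · simpa [tipOf, hi] using hs.2.1
  · rw [Bool.eq_iff_iff, Bool.not_eq_true', ← Bool.not_eq_true]
    simp [tipOf_eq_true_iff, hij, hs.neg_mem_iff]
  · rw [Bool.eq_iff_iff]
    simp [tipOf_eq_true_iff, hijk, hs.and_mem_iff]

lemma tipOf_R0 {s t : Set Formula} (hs : IsPrime KDe s) (ht : IsPrime KDe t)
    (hst : boxInv s ⊆ t) : R0 ψs (tipOf ψs s) (tipOf ψs t) := by
  refine ⟨tipOf_mem_tips hs, tipOf_mem_tips ht, fun i j hij hi => ?_⟩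
  rw [tipOf_eq_true_iff, hij] at hi
  exact (tipOf_eq_true_iff ψs t j).2 (hst hi)

lemma isClip_X0 (ψs : Fin n → Formula) : IsClip ψs (X0 ψs).1 (X0 ψs).2 where
  wsub := subset_rfl
  rmem _ _ h := ⟨h.1, h.2.1⟩
  rsub _ _ h := h
  tmem _ hs := tipOf_mem_tips hs
  tedge _ _ hs ht hst := tipOf_R0 hs ht hst

variable {W : Set (Fin n → Bool)} {R : (Fin n → Bool) → (Fin n → Bool) → Prop}

lemma IsClip.tipOf_mem_sigmaW (h : IsClip ψs W R) {s : Set Formula} (hs : IsPrime KDe s) :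
    tipOf ψs s ∈ sigmaW ψs W R := by
  refine ⟨h.tmem s hs, fun i j hij hi => ?_⟩
  have hbox : box (ψs j) ∉ s := by
    rw [← hij, ← tipOf_eq_true_iff, hi]
    exact Bool.false_ne_true
  obtain ⟨t, ht, hst, hjt⟩ := exists_prime_succ hs hbox
  exact ⟨tipOf ψs t, h.tmem t ht, h.tedge s t hs ht hst, by simpa [tipOf] using hjt⟩

lemma IsClip.sigmaPair (h : IsClip ψs W R) :
    IsClip ψs (sigmaPair ψs (W, R)).1 (sigmaPair ψs (W, R)).2 where
  wsub _ ha := h.wsub ha.1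
  rmem _ _ hab := ⟨hab.1, hab.2.1⟩
  rsub a b hab := h.rsub a b hab.2.2.1
  tmem _ hs := h.tipOf_mem_sigmaW hs
  tedge s t hs ht hst := by
    obtain ⟨u, hu, hsu, hut⟩ := exists_prime_between hs ht hst
    exact ⟨h.tipOf_mem_sigmaW hs, h.tipOf_mem_sigmaW ht, h.tedge s t hs ht hst,
      tipOf ψs u, h.tmem u hu, h.tedge s u hs hu hsu, h.tedge u t hu ht hut⟩

lemma isClip_iterate_sigmaPair (ψs : Fin n → Formula) (m : ℕ) :
    IsClip ψs ((sigmaPair ψs)^[m] (X0 ψs)).1 ((sigmaPair ψs)^[m] (X0 ψs)).2 := by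
  induction m with
  | zero => exact isClip_X0 ψs
  | succ m ih =>
    rw [Function.iterate_succ_apply']
    exact ih.sigmaPair

end Clips

section Kripke

variable {α : Type*} (R : α → α → Prop)

def Sat (V : ℕ → α → Prop) : Formula → α → Prop
  | .atom p, w => V p w
  | .falsum, _ => False
  | .neg A, w => ¬ Sat V A w
  | .and A B, w => Sat V A w ∧ Sat V B w
  | .box A, w => ∀ u, R w u → Sat V A u

def logicOf : Set Formula := {A | ∀ (V : ℕ → α → Prop) (w : α), Sat R V A w}

variable {R}

lemma sat_imp {V : ℕ → α → Prop} {A B : Formula} {w : α} :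
    Sat R V (A.imp B) w ↔ (Sat R V A w → Sat R V B w) := by
  simp only [Formula.imp, Sat]
  tauto

lemma sat_of_tautology {V : ℕ → α → Prop} {A : Formula} (h : Tautology A) (w : α) :
    Sat R V A w := by
  classical
  have hv : IsBoolVal fun B => decide (Sat R V B w) :=
    ⟨decide_eq_false id, fun B => by by_cases hB : Sat R V B w <;> simp [Sat, hB],
      fun B C => by by_cases hB : Sat R V B w <;> simp [Sat, hB]⟩
  simpa using h _ hv

lemma sat_fsubst (V : ℕ → α → Prop) (σ : ℕ → Formula) (A : Formula) (w : α) :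
    Sat R V (fsubst σ A) w ↔ Sat R (fun p => Sat R V (σ p)) A w := by
  induction A generalizing w with
  | atom p => rfl
  | falsum => rfl
  | neg A ih => exact not_congr (ih w)
  | and A B ihA ihB => exact and_congr (ihA w) (ihB w)
  | box A ih => exact forall_congr' fun u => imp_congr_right fun _ => ih u

theorem isModalLogic_logicOf : IsModalLogic (logicOf R) where
  taut _ h _ w := sat_of_tautology h w
  mp _ _ h₁ h₂ V w := sat_imp.1 (h₁ V w) (h₂ V w)
  subst A σ h V w := (sat_fsubst V σ A w).2 (h _ w)
  axK _ _ := sat_imp.2 fun ⟨h₁, h₂⟩ u hu => ⟨h₁ u hu, h₂ u hu⟩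
  axTop _ _ _ _ := id
  mono _ _ h V _ := sat_imp.2 fun hA u hu => sat_imp.1 (h V u) (hA u hu)

theorem KDe_subset_logicOf (hdense : ∀ a b, R a b → ∃ c, R a c ∧ R c b) :
    KDe ⊆ logicOf R :=
  fun _ hA => hA _ ⟨isModalLogic_logicOf, fun _ _ => sat_imp.2 fun h u hu =>
    let ⟨c, hwc, hcu⟩ := hdense _ u hu
    h c hwc u hcu⟩

end Kripke

lemma mem_Subf_self (A : Formula) : A ∈ Subf A := by
  cases A <;> simp [Subf]

lemma Subf_subset_of_mem {A B : Formula} (h : B ∈ Subf A) : Subf B ⊆ Subf A := by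
  induction A with
  | atom | falsum => rw [Set.mem_singleton_iff.1 h]
  | neg A ih | box A ih =>
    rcases h with rfl | h
    · exact subset_rfl
    · exact (ih h).trans (Set.subset_insert _ _)
  | and A C ihA ihC =>
    rcases h with rfl | h | h
    · exact subset_rfl
    · exact (ihA h).trans (Set.subset_union_left.trans (Set.subset_insert _ _))
    · exact (ihC h).trans (Set.subset_union_right.trans (Set.subset_insert _ _))

theorem sat_iff_of_subset_sigmaW {φ : Formula} {n : ℕ} {ψs : Fin n → Formula}
    (hinj : Function.Injective ψs) (hrange : Set.range ψs = Subf φ)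
    {W : Set (Fin n → Bool)} {R : (Fin n → Bool) → (Fin n → Bool) → Prop}
    (hW : W ⊆ tips ψs) (hR : ∀ a b, R a b → R0 ψs a b) (hσ : W ⊆ sigmaW ψs W R)
    (A : Formula) (hA : A ∈ Subf φ) (i : Fin n) (hi : ψs i = A) (a : W) :
    Sat (fun a b : W => R a b) (fun p a => ∃ j, ψs j = atom p ∧ a.1 j = true) A a ↔
      a.1 i = true := by
  have index : ∀ {B}, B ∈ Subf φ → ∃ j, ψs j = B := fun hB => hrange.ge hB
  induction A generalizing i a with
  | atom p => exact ⟨fun ⟨j, hj, hja⟩ => hinj (hj.trans hi.symm) ▸ hja, fun h => ⟨i, hi, h⟩⟩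
  | falsum => simp [Sat, (hW a.2).1 i hi]
  | neg B ih =>
    have hB : B ∈ Subf φ := Subf_subset_of_mem hA (Set.mem_insert_of_mem _ (mem_Subf_self B))
    obtain ⟨j, rfl⟩ := index hB
    rw [(hW a.2).2.1 i j hi, Bool.not_eq_true', ← Bool.not_eq_true]
    exact not_congr (ih hB j rfl a)
  | and B C ihB ihC =>
    have hB : B ∈ Subf φ :=
      Subf_subset_of_mem hA (Set.mem_insert_of_mem _ (Set.mem_union_left _ (mem_Subf_self B)))
    have hC : C ∈ Subf φ :=
      Subf_subset_of_mem hA (Set.mem_insert_of_mem _ (Set.mem_union_right _ (mem_Subf_self C)))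
    obtain ⟨j, rfl⟩ := index hB
    obtain ⟨k, rfl⟩ := index hC
    rw [(hW a.2).2.2 i j k hi, Bool.and_eq_true]
    exact and_congr (ihB hB j rfl a) (ihC hC k rfl a)
  | box B ih =>
    have hB : B ∈ Subf φ := Subf_subset_of_mem hA (Set.mem_insert_of_mem _ (mem_Subf_self B))
    obtain ⟨j, rfl⟩ := index hB
    refine ⟨fun h => ?_, fun h b hab => ?_⟩
    · by_contra hai
      obtain ⟨b, hbW, hab, hbj⟩ := (hσ a.2).2 i j hi (Bool.eq_false_iff.2 hai)
      exact absurd ((ih hB j rfl ⟨b, hbW⟩).1 (h ⟨b, hbW⟩ hab)) (by simp [hbj])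
    · exact (ih hB j rfl b).2 ((hR a b hab).2.2 i j hi h)

theorem stmt13_general (φ : Formula) {n : ℕ} (ψs : Fin (n + 1) → Formula)
    (henum : IsEnum φ ψs) (hlast : ψs (Fin.last n) = φ)
    (k : ℕ)
    (hfix : (sigmaPair ψs)^[k + 1] (X0 ψs) = (sigmaPair ψs)^[k] (X0 ψs)) :
    φ ∈ KDe ↔
      ∀ a : Fin (n + 1) → Bool, a ∈ ((sigmaPair ψs)^[k] (X0 ψs)).1 →
        a (Fin.last n) = true := by
  set X := (sigmaPair ψs)^[k] (X0 ψs)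
  have hclip : IsClip ψs X.1 X.2 := isClip_iterate_sigmaPair ψs k
  rw [Function.iterate_succ_apply'] at hfix
  have hdense (a b : X.1) (hab : X.2 a b) : ∃ c : X.1, X.2 a c ∧ X.2 c b := by
    obtain ⟨-, -, -, c, hc, hac, hcb⟩ := (congrArg Prod.snd hfix).symm ▸ hab
    exact ⟨⟨c, hc⟩, hac, hcb⟩
  have htruth (a : X.1) := sat_iff_of_subset_sigmaW henum.1 henum.2.1 hclip.wsub hclip.rsub
    (congrArg Prod.fst hfix).ge φ (mem_Subf_self φ) _ hlast a
  refine ⟨fun hφ a ha => (htruth ⟨a, ha⟩).1 (KDe_subset_logicOf hdense hφ _ _), fun h => ?_⟩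
  by_contra hφ
  obtain ⟨M, hM, hMprime⟩ := exists_prime_superset (Γ := insert (neg φ) KDe)
    fun h => hφ (isTheory_KDe.mem_of_derives (of_insert_neg h))
  have hφM : φ ∈ M := hlast ▸ (tipOf_eq_true_iff ψs M _).1 (h _ (hclip.tmem M hMprime))
  exact (hMprime.neg_mem_iff φ).1 (hM (Set.mem_insert _ _)) hφM

/-- With `ψ_n = φ` the last element of the enumeration and
`(W^{k_φ},R^{k_φ}) = σ_φ^{k_φ}(W⁰,R⁰)` the fixpoint of `σ_φ`, one has `φ ∈ KDe` iff
every tip of `W^{k_φ}` gives the value `1` to `φ`. -/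
theorem stmt13 (φ : Formula) {n : ℕ} (ψs : Fin (n + 1) → Formula)
    (henum : IsEnum φ ψs) (hlast : ψs (Fin.last n) = φ)
    (k : ℕ)
    (hfix : (sigmaPair ψs)^[k + 1] (X0 ψs) = (sigmaPair ψs)^[k] (X0 ψs))
    (hleast : ∀ j : ℕ, (sigmaPair ψs)^[j + 1] (X0 ψs) = (sigmaPair ψs)^[j] (X0 ψs) →
      k ≤ j) :
    φ ∈ KDe ↔
      ∀ a : Fin (n + 1) → Bool, a ∈ ((sigmaPair ψs)^[k] (X0 ψs)).1 →
        a (Fin.last n) = true :=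
  stmt13_general φ ψs henum hlast k hfix
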